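/- (Corollary 2) Let ℓ_l and ℓ_r be positive integers with ℓ_l = ℓ_r or ℓ_l = ℓ_r + 1. Let C_l ⊆ F₂^{ℓ_l} be a finite set of nonzero vectors, let d_min be the minimum Hamming weight among vectors of C_l, and let B = |{u ∈ C_l : w_H(u) = d_min}|. Take the right child code to be all of F₂^{ℓ_r}. Consider the average parent weight enumerating polynomial P(Y) = (1/ℓ_l!) · Σ_{π} Σ_{u ∈ C_l} Σ_{v ∈ F₂^{ℓ_r}} Y^{w_H(u + π·pad(v)) + w_H(v)} ∈ ℚ[Y], where π ranges over all permutations of {0,…,ℓ_l−1}. Then the smallest exponent of Y appearing in P(Y) with nonzero coefficient is d_min, and the coefficient of Y^{d_min} in P(Y) equals B · Σ_{d_r = 0}^{min(d_min, ℓ_r)} C(ℓ_r, d_r)·C(d_min, d_r) / C(ℓ_l, d_r). -/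

import Mathlib

/-- `pad l r v` extends `v ∈ 𝔽₂^r` to a vector in `𝔽₂^l` by appending zero coordinates.
When `l = r` it is `v` itself; when `l = r + 1` it is `v` extended by one zero. -/
def pad (l r : ℕ) (v : Fin r → ZMod 2) : Fin l → ZMod 2 :=
  fun i => if h : (i : ℕ) < r then v ⟨i, h⟩ else 0

/-!
Over `𝔽₂`, `w(u + x) + w(x) = w(u) + 2·#{i | uᵢ = 0 ∧ xᵢ ≠ 0}`. Hence every exponent of `P`
is at least `w(u) ≥ d_min`, with equality exactly when `w(u) = d_min` and the support of
`x = π·pad(v)` lies inside the support of `u`. For `|supp u| = d` and `w(v) = d_r`, the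
permutations moving `supp (pad v)` into `supp u` are a fraction `C(d, d_r) / C(ℓ_l, d_r)` of all
of them (choose the image set, then order both parts freely); summing over the `C(ℓ_r, d_r)`
vectors `v` of each weight gives the coefficient of `Y^{d_min}`.
-/

open Finset Polynomial
open scoped Nat

theorem hammingNorm_comp_equiv {ι κ β : Type*} [Fintype ι] [Fintype κ] [Zero β]
    [DecidableEq β] (σ : κ ≃ ι) (x : ι → β) : hammingNorm (x ∘ σ) = hammingNorm x :=
  card_equiv σ (by simp)

theorem hammingNorm_pad {l r : ℕ} (h : r ≤ l) (v : Fin r → ZMod 2) :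
    hammingNorm (pad l r v) = hammingNorm v := by
  have hsupp : (univ.filter fun i => pad l r v i ≠ 0) =
      (univ.filter fun j => v j ≠ 0).map (Fin.castLEEmb h) := by
    ext i
    rw [mem_filter_univ, mem_map]
    constructor
    · intro hi
      have hir : (i : ℕ) < r := by
        by_contra hir
        simp [pad, hir] at hi
      exact ⟨⟨i, hir⟩, by simpa [pad, hir] using hi, rfl⟩
    · rintro ⟨j, hj, rfl⟩
      simpa [pad] using hj
  exact (congrArg card hsupp).trans (card_map _)

section ZModTwo

variable {ι : Type*} [Fintype ι]

theorem hammingNorm_add_add_hammingNorm (u x : ι → ZMod 2) :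
    hammingNorm (u + x) + hammingNorm x = hammingNorm u + 2 * #{i | u i = 0 ∧ x i ≠ 0} := by
  have key : ∀ a b : ZMod 2, (if a + b ≠ 0 then 1 else 0) + (if b ≠ 0 then 1 else 0) =
      (if a ≠ 0 then 1 else 0) + 2 * (if a = 0 ∧ b ≠ 0 then 1 else 0) := by decide
  simp only [hammingNorm, card_filter, ← sum_add_distrib, mul_sum, Pi.add_apply, key]

theorem hammingNorm_add_add_hammingNorm_eq_iff (u x : ι → ZMod 2) :
    hammingNorm (u + x) + hammingNorm x = hammingNorm u ↔ ∀ i, x i ≠ 0 → u i ≠ 0 := by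
  rw [hammingNorm_add_add_hammingNorm]
  simpa [filter_eq_empty_iff] using forall_congr' fun _ => not_imp_not.symm

theorem sum_apply_hammingNorm [DecidableEq ι] {M : Type*} [AddCommMonoid M] (f : ℕ → M) :
    ∑ v : ι → ZMod 2, f (hammingNorm v) =
      ∑ d ∈ range (Fintype.card ι + 1), (Fintype.card ι).choose d • f d := by
  let e : (ι → ZMod 2) ≃ Finset ι :=
    { toFun v := {i | v i ≠ 0}
      invFun s i := if i ∈ s then 1 else 0
      left_inv v := funext fun i => by
        have : ∀ a : ZMod 2, (if a ≠ 0 then 1 else 0) = a := by decide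
        simpa using this (v i)
      right_inv s := by ext; simp }
  rw [← card_univ, ← sum_powerset_apply_card, powerset_univ]
  exact Fintype.sum_equiv e _ _ fun v => rfl

end ZModTwo

section PermCount

variable {α : Type*} [Fintype α] [DecidableEq α]

theorem card_perm_eq_on (s : Finset α) (f : s ↪ α) :
    Fintype.card {π : Equiv.Perm α // ∀ a : s, π a = f a} = (Fintype.card α - #s)! := by
  let e₀ : (s : Set α) ≃ Set.range f := Equiv.ofInjective f f.injective
  have hcard : Fintype.card ((s : Set α)ᶜ : Set α) = Fintype.card ((Set.range f)ᶜ : Set α) := by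
    rw [Fintype.card_compl_set, Fintype.card_compl_set, Set.card_range_of_injective f.injective]
    rfl
  refine (Fintype.card_congr (Equiv.Set.compl e₀)).trans ?_
  rw [Fintype.card_equiv (Fintype.equivOfCardEq hcard), Fintype.card_compl_set]
  simp

theorem card_perm_mapsTo (T S : Finset α) :
    #{π : Equiv.Perm α | ∀ t ∈ T, π t ∈ S} = (#S).descFactorial #T * (Fintype.card α - #T)! := by
  let extensions (f : T ↪ S) : Finset (Equiv.Perm α) := {π | ∀ a : T, π a = f a}
  have hunion : ({π | ∀ t ∈ T, π t ∈ S} : Finset (Equiv.Perm α)) = univ.biUnion extensions := by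
    ext π
    simp only [mem_filter_univ, mem_biUnion, mem_univ, true_and, extensions]
    constructor
    · intro h
      exact ⟨⟨fun a => ⟨π a, h a a.2⟩, fun a b hab =>
        Subtype.ext (π.injective (congrArg Subtype.val hab))⟩, fun a => rfl⟩
    · rintro ⟨f, hf⟩ t ht
      rw [hf ⟨t, ht⟩]
      exact (f _).2
  have hdisj : (Set.univ : Set (T ↪ S)).PairwiseDisjoint extensions := by
    intro f _ g _ hfg
    refine disjoint_left.mpr fun π hf hg => hfg (DFunLike.ext _ _ fun a => Subtype.ext ?_)
    simp only [mem_filter_univ, extensions] at hf hg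
    rw [← hf, ← hg]
  have hext (f : T ↪ S) : #(extensions f) = (Fintype.card α - #T)! := by
    rw [← Fintype.card_subtype]
    exact card_perm_eq_on T (f.trans (Function.Embedding.subtype _))
  rw [hunion, card_biUnion (by simpa using hdisj), sum_congr rfl fun f _ => hext f, sum_const,
    card_univ, Fintype.card_embedding_eq, Fintype.card_coe, Fintype.card_coe, smul_eq_mul]

theorem card_perm_mapsTo_div_factorial (T S : Finset α) :
    (#{π : Equiv.Perm α | ∀ t ∈ T, π t ∈ S} : ℚ) / (Fintype.card α)! =
      ((#S).choose #T : ℚ) / (Fintype.card α).choose #T := by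
  have hT : #T ≤ Fintype.card α := card_le_univ T
  rw [card_perm_mapsTo, Nat.descFactorial_eq_factorial_mul_choose,
    ← Nat.choose_mul_factorial_mul_factorial hT]
  have : ((Fintype.card α).choose #T : ℚ) ≠ 0 := by exact_mod_cast (Nat.choose_pos hT).ne'
  push_cast
  field_simp

end PermCount

section Parent

/-- The exponent of `Y` contributed by `(π, u, v)`: the weight of the parent label
`(u + π·pad(v), v)`. -/
def parentWeight {l r : ℕ} (π : Equiv.Perm (Fin l)) (u : Fin l → ZMod 2)
    (v : Fin r → ZMod 2) : ℕ :=
  hammingNorm (u + fun i => pad l r v (π⁻¹ i)) + hammingNorm v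

noncomputable def averageParentWEF (l r : ℕ) (C : Finset (Fin l → ZMod 2)) : ℚ[X] :=
  (1 / (l ! : ℚ)) • ∑ π : Equiv.Perm (Fin l), ∑ u ∈ C, ∑ v : Fin r → ZMod 2,
    X ^ parentWeight π u v

def mwefFactor (l r d : ℕ) : ℚ :=
  ∑ dr ∈ range (min d r + 1), ((r.choose dr : ℚ) * (d.choose dr : ℚ)) / (l.choose dr : ℚ)

theorem mwefFactor_pos (l r d : ℕ) : 0 < mwefFactor l r d :=
  sum_pos' (fun _ _ => by positivity) ⟨0, by simp⟩

variable {l r : ℕ}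

theorem hammingNorm_perm_pad (hrl : r ≤ l) (π : Equiv.Perm (Fin l)) (v : Fin r → ZMod 2) :
    hammingNorm (fun i => pad l r v (π⁻¹ i)) = hammingNorm v :=
  (hammingNorm_comp_equiv π⁻¹ (pad l r v)).trans (hammingNorm_pad hrl v)

theorem hammingNorm_le_parentWeight (hrl : r ≤ l) (π : Equiv.Perm (Fin l))
    (u : Fin l → ZMod 2) (v : Fin r → ZMod 2) : hammingNorm u ≤ parentWeight π u v := by
  have h := hammingNorm_add_add_hammingNorm u fun i => pad l r v (π⁻¹ i)
  rw [hammingNorm_perm_pad hrl] at h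
  rw [parentWeight]
  omega

theorem parentWeight_eq_hammingNorm_iff (hrl : r ≤ l) (π : Equiv.Perm (Fin l))
    (u : Fin l → ZMod 2) (v : Fin r → ZMod 2) :
    parentWeight π u v = hammingNorm u ↔ ∀ t, pad l r v t ≠ 0 → u (π t) ≠ 0 := by
  rw [parentWeight, ← hammingNorm_perm_pad hrl π v, hammingNorm_add_add_hammingNorm_eq_iff,
    ← π.forall_congr_right]
  simp

theorem card_parentWeight_eq_hammingNorm_div (hrl : r ≤ l) (u : Fin l → ZMod 2)
    (v : Fin r → ZMod 2) :
    (#{π | parentWeight π u v = hammingNorm u} : ℚ) / l ! =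
      ((hammingNorm u).choose (hammingNorm v) : ℚ) / l.choose (hammingNorm v) := by
  have hcount := card_perm_mapsTo_div_factorial {t | pad l r v t ≠ 0} {i | u i ≠ 0}
  simp only [mem_filter_univ, Fintype.card_fin] at hcount
  rw [← hammingNorm_pad hrl v]
  convert hcount using 4
  · ext π
    simp [parentWeight_eq_hammingNorm_iff hrl]
  all_goals rfl

theorem sum_card_parentWeight_eq_hammingNorm_div (hrl : r ≤ l) (u : Fin l → ZMod 2) :
    ∑ v : Fin r → ZMod 2, (#{π | parentWeight π u v = hammingNorm u} : ℚ) / l ! =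
      mwefFactor l r (hammingNorm u) := by
  simp_rw [card_parentWeight_eq_hammingNorm_div hrl u]
  rw [sum_apply_hammingNorm (ι := Fin r) (M := ℚ)
    fun d => ((hammingNorm u).choose d : ℚ) / l.choose d, Fintype.card_fin, mwefFactor]
  simp only [nsmul_eq_mul, mul_div_assoc]
  refine (sum_subset (range_subset_range.mpr (by omega)) fun d hd hd' => ?_).symm
  rw [mem_range] at hd hd'
  rw [Nat.choose_eq_zero_of_lt (n := hammingNorm u) (by omega), Nat.cast_zero, zero_div, mul_zero]

theorem coeff_averageParentWEF (C : Finset (Fin l → ZMod 2)) (e : ℕ) :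
    (averageParentWEF l r C).coeff e =
      ∑ u ∈ C, ∑ v : Fin r → ZMod 2, (#{π | parentWeight π u v = e} : ℚ) / l ! := by
  simp only [averageParentWEF, coeff_smul, finsetSum_coeff, coeff_X_pow, smul_eq_mul, mul_sum]
  rw [sum_comm]
  refine sum_congr rfl fun u _ => ?_
  rw [sum_comm]
  refine sum_congr rfl fun v _ => ?_
  rw [← mul_sum, sum_boole, one_div_mul_eq_div]
  simp only [eq_comm]

theorem coeff_averageParentWEF_of_le (hrl : r ≤ l) {C : Finset (Fin l → ZMod 2)} {e : ℕ}
    (hC : ∀ u ∈ C, e ≤ hammingNorm u) :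
    (averageParentWEF l r C).coeff e = #{u ∈ C | hammingNorm u = e} * mwefFactor l r e := by
  calc (averageParentWEF l r C).coeff e
      = ∑ u ∈ C, if hammingNorm u = e then mwefFactor l r e else 0 := by
        rw [coeff_averageParentWEF]
        refine sum_congr rfl fun u hu => ?_
        split_ifs with hue
        · subst hue
          exact sum_card_parentWeight_eq_hammingNorm_div hrl u
        · refine sum_eq_zero fun v _ => ?_
          rw [filter_false_of_mem fun π _ => ((hC u hu).lt_of_ne' hue).trans_le
            (hammingNorm_le_parentWeight hrl π u v) |>.ne', card_empty, Nat.cast_zero, zero_div]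
    _ = #{u ∈ C | hammingNorm u = e} * mwefFactor l r e := by
        rw [sum_ite, sum_const_zero, add_zero, sum_const, nsmul_eq_mul]

end Parent

open Polynomial in
theorem average_MWEF_full_right_child_general (ll lr : ℕ)
    (hcase : ll = lr ∨ ll = lr + 1)
    (Cl : Finset (Fin ll → ZMod 2))
    (dmin : ℕ) (hmem : ∃ u ∈ Cl, hammingNorm u = dmin)
    (hmin : ∀ u ∈ Cl, dmin ≤ hammingNorm u)
    (B : ℕ) (hB : B = (Cl.filter fun u => hammingNorm u = dmin).card)
    (P : ℚ[X])
    (hP : P = (1 / (ll.factorial : ℚ)) •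
        ∑ π : Equiv.Perm (Fin ll), ∑ u ∈ Cl, ∑ v : Fin lr → ZMod 2,
          (X : ℚ[X]) ^
            (hammingNorm (u + fun i => pad ll lr v (π⁻¹ i)) + hammingNorm v)) :
    (∀ e, e < dmin → P.coeff e = 0) ∧
      P.coeff dmin ≠ 0 ∧
      P.coeff dmin =
        (B : ℚ) * ∑ dr ∈ Finset.range (min dmin lr + 1),
          ((lr.choose dr : ℚ) * (dmin.choose dr : ℚ)) / (ll.choose dr : ℚ) := by
  have hrl : lr ≤ ll := by omega
  have hcoeff (e : ℕ) (he : e ≤ dmin) :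
      P.coeff e = #{u ∈ Cl | hammingNorm u = e} * mwefFactor ll lr e := by
    subst hP
    exact coeff_averageParentWEF_of_le hrl fun u hu => he.trans (hmin u hu)
  have hB_pos : 0 < B := by
    obtain ⟨u, hu, hud⟩ := hmem
    exact hB ▸ card_pos.mpr ⟨u, mem_filter.mpr ⟨hu, hud⟩⟩
  refine ⟨fun e he => ?_, ?_, ?_⟩
  · rw [hcoeff e he.le, filter_false_of_mem fun u hu => (he.trans_le (hmin u hu)).ne',
      card_empty, Nat.cast_zero, zero_mul]
  · rw [hcoeff dmin le_rfl, ← hB]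
    exact mul_ne_zero (by exact_mod_cast hB_pos.ne') (mwefFactor_pos ll lr dmin).ne'
  · rw [hcoeff dmin le_rfl, ← hB]
    rfl

open Polynomial in
/-- **Corollary 2.** Let `C_l ⊆ 𝔽₂^{ℓ_l}` be a set of nonzero vectors with
minimum weight `d_min` attained `B` times, and take the right child code to be the whole
space `𝔽₂^{ℓ_r}`. Then the smallest exponent appearing with nonzero coefficient in the
average parent weight enumerating polynomial `P` is `d_min`, with coefficient
`B · Σ_{d_r=0}^{min(d_min, ℓ_r)} C(ℓ_r,d_r) C(d_min,d_r) / C(ℓ_l,d_r)`. -/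
theorem average_MWEF_full_right_child (ll lr : ℕ) (hll : 0 < ll) (hlr : 0 < lr)
    (hcase : ll = lr ∨ ll = lr + 1)
    (Cl : Finset (Fin ll → ZMod 2)) (hne : Cl.Nonempty)
    (hnz : ∀ u ∈ Cl, u ≠ 0)
    (dmin : ℕ) (hmem : ∃ u ∈ Cl, hammingNorm u = dmin)
    (hmin : ∀ u ∈ Cl, dmin ≤ hammingNorm u)
    (B : ℕ) (hB : B = (Cl.filter fun u => hammingNorm u = dmin).card)
    (P : ℚ[X])
    (hP : P = (1 / (ll.factorial : ℚ)) •
        ∑ π : Equiv.Perm (Fin ll), ∑ u ∈ Cl, ∑ v : Fin lr → ZMod 2,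
          (X : ℚ[X]) ^
            (hammingNorm (u + fun i => pad ll lr v (π⁻¹ i)) + hammingNorm v)) :
    (∀ e, e < dmin → P.coeff e = 0) ∧
      P.coeff dmin ≠ 0 ∧
      P.coeff dmin =
        (B : ℚ) * ∑ dr ∈ Finset.range (min dmin lr + 1),
          ((lr.choose dr : ℚ) * (dmin.choose dr : ℚ)) / (ll.choose dr : ℚ) :=
  average_MWEF_full_right_child_general ll lr hcase Cl dmin hmem hmin B hB P hP
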